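/- For odd N = 2k+1, Σ_{s=0}^{k} (N/(N-s))·C(N-s, s) equals the N-th Lucas number L_N = φ^N + (1-φ)^N, where φ = (1+√5)/2. -/

import Mathlib

/-!
Since `N/(N-s)·C(N-s,s) = C(N-s,s) + C(N-s-1,s-1)`, the sum splits into two shallow diagonals of
Pascal's triangle, which sum to `F_{N+1}` and `F_{N-1}`; and `L_N = F_{N-1} + F_{N+1}`.
The closed form follows from `φ F_{n+1} + F_n = φ^{n+1}` and its analogue for `ψ = 1 - φ`.
-/

/-- Lucas numbers: L_0 = 2, L_1 = 1, L_{n+2} = L_{n+1} + L_n. -/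
def lucas : ℕ → ℕ
  | 0 => 2
  | 1 => 1
  | n + 2 => lucas (n + 1) + lucas n

open Finset Nat

theorem lucas_succ_eq_fib_add_fib (n : ℕ) : lucas (n + 1) = fib n + fib (n + 2) := by
  induction n using Nat.twoStepInduction with
  | zero => rfl
  | one => rfl
  | more n ih₁ ih₂ =>
    rw [lucas.eq_3, ih₁, ih₂, fib_add_two (n := n + 2), fib_add_two (n := n + 1), fib_add_two]
    ring

open Real in
theorem coe_lucas_eq (n : ℕ) : (lucas n : ℝ) = goldenRatio ^ n + goldenConj ^ n := by
  cases n with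
  | zero => norm_num [lucas]
  | succ n =>
    rw [← goldenRatio_mul_fib_succ_add_fib, ← goldenConj_mul_fib_succ_add_fib,
      lucas_succ_eq_fib_add_fib, fib_add_two]
    push_cast
    linear_combination (fib (n + 1) : ℝ) * goldenRatio_add_goldenConj

theorem fib_eq_sum_range_choose {n m : ℕ} (h₁ : n ≤ 2 * m) (h₂ : m ≤ n) :
    fib n = ∑ s ∈ range m, (n - 1 - s).choose s := by
  cases n with
  | zero => simp [Nat.le_zero.1 h₂]
  | succ n =>
    rw [fib_succ_eq_sum_choose, ← Nat.sum_antidiagonal_swap,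
      Nat.sum_antidiagonal_eq_sum_range_succ_mk, Nat.add_sub_cancel]
    refine (sum_subset (range_subset_range.2 h₂) fun s hs hsm => ?_).symm
    simp only [mem_range] at hs hsm
    rw [Prod.swap_prod_mk]
    exact choose_eq_zero_of_lt (by omega)

-- `N/(N-s)·C(N-s,s) = C(N-s,s) + C(N-s-1,s-1)` with `N = m + s + 2` and `s + 1` for `s`.
theorem add_add_two_mul_choose_div (m s : ℕ) :
    (m + s + 2) * (m + 1).choose (s + 1) / (m + 1) = (m + 1).choose (s + 1) + m.choose s := by
  rw [show m + s + 2 = (m + 1) + (s + 1) by ring, add_mul, mul_comm (s + 1),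
    ← add_one_mul_choose_eq, ← mul_add, Nat.mul_div_cancel_left _ m.succ_pos]

/-- For odd N = 2k+1, Σ_{s=0}^{k} (N/(N-s))·C(N-s,s) equals the N-th Lucas number
L_N = φ^N + (1-φ)^N, φ = (1+√5)/2. -/
theorem vertex_count_lucas (k : ℕ) :
    lucas (2 * k + 1)
        = ∑ s ∈ Finset.range (k + 1),
            (2 * k + 1) * (2 * k + 1 - s).choose s / (2 * k + 1 - s) ∧
    (lucas (2 * k + 1) : ℝ)
        = ((1 + Real.sqrt 5) / 2) ^ (2 * k + 1)
          + (1 - (1 + Real.sqrt 5) / 2) ^ (2 * k + 1) := by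
  refine ⟨?_, by simpa only [← Real.one_sub_goldenConj] using coe_lucas_eq (2 * k + 1)⟩
  have hterm : ∀ s ∈ range k,
      (2 * k + 1) * (2 * k + 1 - (s + 1)).choose (s + 1) / (2 * k + 1 - (s + 1))
        = (2 * k + 1 - (s + 1)).choose (s + 1) + (2 * k - 1 - s).choose s := by
    intro s hs
    obtain ⟨m, hm⟩ : ∃ m, 2 * k = m + s + 1 := ⟨2 * k - s - 1, by have := mem_range.1 hs; omega⟩
    rw [show 2 * k + 1 - (s + 1) = m + 1 by omega, show 2 * k - 1 - s = m by omega,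
      show 2 * k + 1 = m + s + 2 by omega, add_add_two_mul_choose_div]
  rw [sum_range_succ', sum_congr rfl hterm, sum_add_distrib, lucas_succ_eq_fib_add_fib,
    fib_eq_sum_range_choose (n := 2 * k + 2) (m := k + 1) (by omega) (by omega), sum_range_succ',
    fib_eq_sum_range_choose (n := 2 * k) (m := k) le_rfl (by omega)]
  simp only [Nat.add_one_sub_one, Nat.sub_zero, choose_zero_right, mul_one,
    Nat.div_self (succ_pos _)]
  omega
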